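/- arXiv:2512.17718 — 2 statements merged into one kernel-verified Lean document; each statement's English description precedes it below -/
import Mathlib

section
/- For every real t with 0 < t < 1/2, one has (1 - t)² · log(1/(1-t)) > t² · log(1/t), where log denotes the natural logarithm. Equivalently, the function f(t) = (1-t)² log(1/(1-t)) − t² log(1/t) is strictly positive on the open interval (0, 1/2). -/
/-!
`f t = t² log t - (1 - t)² log (1 - t)` vanishes at `0` and `1/2`, and its derivative is
`1 - 2 H(t)` with `H` the binary entropy. Since `H` increases strictly on `[0, 1/2]`, `f` is
strictly concave there, hence positive inside.
-/

open Real Set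

noncomputable def sqMulLogSub (t : ℝ) : ℝ :=
  t ^ 2 * log t - (1 - t) ^ 2 * log (1 - t)

lemma hasDerivAt_sq_mul_log {x : ℝ} (hx : x ≠ 0) :
    HasDerivAt (fun u ↦ u ^ 2 * log u) (2 * (x * log x) + x) x := by
  simp only [sq, mul_assoc]
  exact ((hasDerivAt_id' x).fun_mul (hasDerivAt_mul_log hx)).congr_deriv (by ring)

lemma continuous_sqMulLogSub : Continuous sqMulLogSub := by
  have h : Continuous fun u : ℝ ↦ u ^ 2 * log u := by
    simpa only [sq, mul_assoc] using continuous_id'.fun_mul continuous_mul_log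
  exact h.sub (h.comp (continuous_const.sub continuous_id))

lemma hasDerivAt_sqMulLogSub {x : ℝ} (hx₀ : x ≠ 0) (hx₁ : x ≠ 1) :
    HasDerivAt sqMulLogSub (1 - 2 * binEntropy x) x := by
  have h := (hasDerivAt_sq_mul_log hx₀).fun_sub
    ((hasDerivAt_sq_mul_log (sub_ne_zero.mpr hx₁.symm)).comp x ((hasDerivAt_id' x).const_sub 1))
  rw [binEntropy, log_inv, log_inv]
  exact h.congr_deriv (by ring)

lemma strictConcaveOn_sqMulLogSub : StrictConcaveOn ℝ (Icc 0 2⁻¹) sqMulLogSub := by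
  refine StrictAntiOn.strictConcaveOn_of_deriv (convex_Icc 0 2⁻¹)
    continuous_sqMulLogSub.continuousOn ?_
  rw [interior_Icc]
  intro x hx y hy hxy
  rw [(hasDerivAt_sqMulLogSub hx.1.ne' (by linarith [hx.2])).deriv,
    (hasDerivAt_sqMulLogSub hy.1.ne' (by linarith [hy.2])).deriv]
  linarith [binEntropy_strictMonoOn (Ioo_subset_Icc_self hx) (Ioo_subset_Icc_self hy) hxy]

lemma sqMulLogSub_pos {t : ℝ} (ht₀ : 0 < t) (ht : t < 2⁻¹) : 0 < sqMulLogSub t := by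
  have h := strictConcaveOn_sqMulLogSub.lt_on_openSegment (left_mem_Icc.mpr (by norm_num))
    (right_mem_Icc.mpr (by norm_num)) (by norm_num)
    (by rw [openSegment_eq_Ioo (by norm_num)]; exact ⟨ht₀, ht⟩)
  have h₀ : sqMulLogSub 0 = 0 := by simp [sqMulLogSub]
  have h₁ : sqMulLogSub 2⁻¹ = 0 := by norm_num [sqMulLogSub]
  simpa [h₀, h₁] using h

/-- For every `t ∈ (0, 1/2)` one has
`(1 - t)² log (1/(1-t)) > t² log (1/t)` (natural logarithm). -/
theorem stmt_5 (t : ℝ) (ht0 : 0 < t) (ht2 : t < 1 / 2) :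
    t ^ 2 * Real.log (1 / t) < (1 - t) ^ 2 * Real.log (1 / (1 - t)) := by
  have h := sqMulLogSub_pos ht0 (by simpa using ht2)
  rw [sqMulLogSub] at h
  simp only [one_div, log_inv]
  linarith
end

section
/- For every real C > 1 and every p ∈ (0, 1/2) there exist constants K > 0, D₀ and ℓ₀, depending only on p and C, with the following property. Let D ≥ D₀ and ℓ ≥ ℓ₀ be integers, d = D²ℓ², and let k ≤ Cℓ be a positive integer. Let m ≥ 0 be an integer, let v, v_1, …, v_k ∈ ℝ^m be fixed vectors with ‖v‖₂ ≤ α√ℓ/√d and ‖v_i‖₂ ≤ α√ℓ/√d for all i, let m₀ ∈ (1−2δ, 1+δ) be fixed, and let Z_1, …, Z_k be i.i.d. N(0, 1/d). Then: P[ m₀·Z_i + ⟨v_i, v⟩ ≥ −c_p/√d for all 1 ≤ i ≤ k ] ≤ (1−p)^k · exp( (a√d/(1−p))·Σ_{i=1}^k ⟨v_i, v⟩ + K·k·δ ), and P[ m₀·Z_i + ⟨v_i, v⟩ < −c_p/√d for all 1 ≤ i ≤ k ] ≤ p^k · exp( −(a√d/p)·Σ_{i=1}^k ⟨v_i, v⟩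 + K·k·δ ). -/
open MeasureTheory ProbabilityTheory

/-- CDF of the standard normal distribution `N(0,1)`. -/
noncomputable def stdNormalCDF (t : ℝ) : ℝ :=
  (gaussianReal 0 1 (Set.Iic t)).toReal

/-- Density of the standard normal distribution `N(0,1)`. -/
noncomputable def stdNormalPDF (t : ℝ) : ℝ :=
  Real.exp (-t ^ 2 / 2) / Real.sqrt (2 * Real.pi)

/-!
With `s_i = √d ⟨v_i, v⟩`, Cauchy–Schwarz gives `|s_i| ≤ α² / D`, as small as needed. Both
events are boxes, so their probabilities factor into `Φ ((c + s_i) / m₀)` and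
`Φ ((-c - s_i) / m₀)`. As `Φ` is 1-Lipschitz and `|m₀ - 1| ≤ 2δ`, removing `m₀` costs an
additive `O(δ)`, which turns into a factor `exp (K δ)` since the main term is bounded below.
The main term is controlled by the tangent bound `Φ x ≤ Φ c * exp (φ c / Φ c * (x - c))` of the
log-concave `Φ`, proved by comparing `φ` with `φ c * exp (φ c / Φ c * (t - c))` between `c`
and `x`. This comparison holds for `x` near `c`, on both sides, thanks to the strict Mills
inequality `c * Φ (-c) < φ c`.
-/

open Real Set

local notation "Φ" => stdNormalCDF
local notation "φ" => stdNormalPDF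

lemma stdNormalPDF_eq_gaussianPDFReal : φ = gaussianPDFReal 0 1 := by
  ext x
  simp [gaussianPDFReal, stdNormalPDF, div_eq_inv_mul]

lemma stdNormalPDF_pos (x : ℝ) : 0 < φ x := by
  rw [stdNormalPDF_eq_gaussianPDFReal]
  exact gaussianPDFReal_pos _ _ _ one_ne_zero

lemma stdNormalPDF_le_one (x : ℝ) : φ x ≤ 1 := by
  have h1 : 1 ≤ √(2 * π) := one_le_sqrt.2 (by linarith [pi_gt_three])
  have h2 : exp (-x ^ 2 / 2) ≤ 1 := exp_le_one_iff.2 (by nlinarith [sq_nonneg x])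
  exact div_le_one_of_le₀ (h2.trans h1) (sqrt_nonneg _)

lemma stdNormalPDF_neg (x : ℝ) : φ (-x) = φ x := by
  simp [stdNormalPDF]

lemma stdNormalPDF_eq_mul_exp (c t : ℝ) : φ t = φ c * exp ((c ^ 2 - t ^ 2) / 2) := by
  rw [stdNormalPDF, stdNormalPDF, div_mul_eq_mul_div, ← exp_add]
  ring_nf

lemma integrable_stdNormalPDF : Integrable φ := by
  rw [stdNormalPDF_eq_gaussianPDFReal]
  exact integrable_gaussianPDFReal 0 1

lemma toReal_gaussianReal_zero_one (s : Set ℝ) :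
    (gaussianReal 0 1 s).toReal = ∫ x in s, φ x := by
  rw [gaussianReal_apply_eq_integral 0 one_ne_zero, stdNormalPDF_eq_gaussianPDFReal,
    ENNReal.toReal_ofReal (setIntegral_nonneg_of_ae (ae_of_all _ (gaussianPDFReal_nonneg 0 1)))]

lemma stdNormalCDF_eq_integral (t : ℝ) : Φ t = ∫ x in Iic t, φ x :=
  toReal_gaussianReal_zero_one _

lemma toReal_gaussianReal_Iio (t : ℝ) : (gaussianReal 0 1 (Iio t)).toReal = Φ t := by
  have := nullSingletonClass_gaussianReal (μ := 0) (one_ne_zero : (1 : NNReal) ≠ 0)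
  rw [stdNormalCDF, measure_congr Iio_ae_eq_Iic]

lemma toReal_gaussianReal_Ici (t : ℝ) : (gaussianReal 0 1 (Ici t)).toReal = Φ (-t) := by
  have hmap : (gaussianReal 0 1).map (fun x => -x) = gaussianReal 0 1 := by
    simpa using gaussianReal_map_neg (μ := 0) (v := 1)
  have hneg : (fun x : ℝ => -x) ⁻¹' Iic (-t) = Ici t := by ext; simp
  rw [stdNormalCDF, ← hmap, Measure.map_apply measurable_neg measurableSet_Iic, hneg, hmap]

lemma stdNormalCDF_neg (t : ℝ) : Φ (-t) = 1 - Φ t := by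
  rw [← toReal_gaussianReal_Ici, ← toReal_gaussianReal_Iio, ← compl_Iio,
    prob_compl_eq_one_sub measurableSet_Iio,
    ENNReal.toReal_sub_of_le prob_le_one ENNReal.one_ne_top, ENNReal.toReal_one]

lemma stdNormalCDF_pos (t : ℝ) : 0 < Φ t := by
  refine ENNReal.toReal_pos ?_ (measure_ne_top _ _)
  exact fun h => by simpa using gaussianReal_absolutelyContinuous' 0 one_ne_zero h

lemma stdNormalCDF_neg_eq_integral (t : ℝ) : Φ (-t) = ∫ x in Ioi t, φ x := by
  rw [← toReal_gaussianReal_Ici, toReal_gaussianReal_zero_one, integral_Ici_eq_integral_Ioi]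

lemma stdNormalCDF_sub (a b : ℝ) : Φ b - Φ a = ∫ x in a..b, φ x := by
  rw [stdNormalCDF_eq_integral, stdNormalCDF_eq_integral, intervalIntegral.integral_Iic_sub_Iic
    integrable_stdNormalPDF.integrableOn integrable_stdNormalPDF.integrableOn]

lemma stdNormalCDF_strictMono : StrictMono Φ := fun x y h => by
  have := intervalIntegral.intervalIntegral_pos_of_pos
    integrable_stdNormalPDF.intervalIntegrable stdNormalPDF_pos h
  linarith [stdNormalCDF_sub x y]

lemma abs_stdNormalCDF_sub_le (x y : ℝ) : |Φ x - Φ y| ≤ |x - y| := by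
  rw [stdNormalCDF_sub, ← norm_eq_abs, ← norm_eq_abs]
  simpa using intervalIntegral.norm_integral_le_of_norm_le_const (C := 1) (a := y) (b := x)
    (f := φ) fun t _ => by rw [norm_of_nonneg (stdNormalPDF_pos t).le]; exact stdNormalPDF_le_one t

lemma mul_stdNormalCDF_neg_lt (c : ℝ) : c * Φ (-c) < φ c := by
  rcases le_or_gt c 0 with hc | hc
  · exact (mul_nonpos_of_nonpos_of_nonneg hc (stdNormalCDF_pos _).le).trans_lt
      (stdNormalPDF_pos c)
  -- On `(c, ∞)`, `φ t < φ c * exp (c ^ 2 - c * t)`, whose integral is `φ c / c`.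
  set g : ℝ → ℝ := fun t => φ c * exp (c ^ 2) * exp (-c * t)
  have hg : IntegrableOn g (Ioi c) := (exp_neg_integrableOn_Ioi c hc).const_mul _
  have hg_int : ∫ t in Ioi c, g t = φ c / c := by
    have hexp : exp (c ^ 2) * exp (-c * c) = 1 := by rw [← exp_add]; ring_nf; exact exp_zero
    rw [integral_const_mul, integral_exp_mul_Ioi (neg_lt_zero.2 hc), mul_div_assoc', mul_assoc,
      mul_neg, hexp, mul_neg_one, neg_div_neg_eq]
  have hφ := stdNormalPDF_pos c
  have hgap : 0 < ∫ t in Ioi c, (g t - φ t) := by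
    have hlt : ∀ t ∈ Ioi c, φ t < g t := fun t (ht : c < t) => by
      show φ t < φ c * exp (c ^ 2) * exp (-c * t)
      rw [stdNormalPDF_eq_mul_exp c, mul_assoc, ← exp_add]
      gcongr
      nlinarith
    rw [setIntegral_pos_iff_support_of_nonneg_ae
      ((ae_restrict_iff' measurableSet_Ioi).2 (ae_of_all _ fun t ht => (sub_pos.2 (hlt t ht)).le))
      (hg.sub integrable_stdNormalPDF.integrableOn)]
    rw [inter_eq_right.2 fun t ht => Function.mem_support.2 (sub_pos.2 (hlt t ht)).ne',
      Real.volume_Ioi]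
    exact ENNReal.zero_lt_top
  rw [integral_sub hg integrable_stdNormalPDF.integrableOn, hg_int,
    ← stdNormalCDF_neg_eq_integral] at hgap
  rwa [sub_pos, lt_div_iff₀ hc, mul_comm] at hgap

lemma integral_le_integral_of_le_on_Icc_of_ge_on_Icc {f g : ℝ → ℝ} {a b : ℝ}
    (hf : IntervalIntegrable f volume a b) (hg : IntervalIntegrable g volume a b)
    (hright : ∀ t ∈ Icc a b, f t ≤ g t) (hleft : ∀ t ∈ Icc b a, g t ≤ f t) :
    ∫ t in a..b, f t ≤ ∫ t in a..b, g t := by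
  rcases le_total a b with hab | hba
  · exact intervalIntegral.integral_mono_on hab hf hg hright
  · rw [intervalIntegral.integral_symm b a, intervalIntegral.integral_symm b a, neg_le_neg_iff]
    exact intervalIntegral.integral_mono_on hba hg.symm hf.symm hleft

lemma integral_exp_mul_sub (r c x : ℝ) (hr : r ≠ 0) :
    ∫ t in c..x, exp (r * (t - c)) = (exp (r * (x - c)) - 1) / r := by
  simp_rw [mul_sub]
  rw [intervalIntegral.integral_comp_mul_sub (fun t => exp t) hr, integral_exp, sub_self,
    exp_zero, smul_eq_mul, inv_mul_eq_div]

lemma stdNormalCDF_le_mul_exp {c x : ℝ} (hx : -2 * (φ c / Φ c) ≤ x + c) :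
    Φ x ≤ Φ c * exp (φ c / Φ c * (x - c)) := by
  set r := φ c / Φ c with hr_def
  have hΦ := stdNormalCDF_pos c
  have hφ := stdNormalPDF_pos c
  have hr : 0 < r := div_pos hφ hΦ
  have hmills : -c < r := by
    rw [lt_div_iff₀ hΦ, ← stdNormalPDF_neg]
    simpa using mul_stdNormalCDF_neg_lt (-c)
  have hcont : Continuous fun t => φ c * exp (r * (t - c)) := by fun_prop
  have hcmp : ∫ t in c..x, φ t ≤ ∫ t in c..x, φ c * exp (r * (t - c)) := by
    refine integral_le_integral_of_le_on_Icc_of_ge_on_Icc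
      integrable_stdNormalPDF.intervalIntegrable (hcont.intervalIntegrable _ _) ?_ ?_
    all_goals
      rintro t ⟨ht₁, ht₂⟩
      rw [stdNormalPDF_eq_mul_exp c t]
      gcongr
      nlinarith
  have hint : φ c * ((exp (r * (x - c)) - 1) / r) = Φ c * (exp (r * (x - c)) - 1) := by
    rw [hr_def]
    field_simp
  rw [← stdNormalCDF_sub, intervalIntegral.integral_const_mul, integral_exp_mul_sub _ _ _ hr.ne',
    hint] at hcmp
  linarith

lemma abs_div_sub_self_le {y B δ m₀ : ℝ} (hy : |y| ≤ B) (hδ : δ ≤ 8⁻¹)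
    (hm₁ : 1 - 2 * δ < m₀) (hm₂ : m₀ < 1 + δ) : |y / m₀ - y| ≤ 3 * B * δ := by
  have hm₀ : 0 < m₀ := by linarith
  have h1 : |1 - m₀| ≤ 2 * δ := abs_le.2 ⟨by linarith, by linarith⟩
  have h2 : y / m₀ - y = y * (1 - m₀) / m₀ := by field_simp
  rw [h2, abs_div, abs_mul, abs_of_pos hm₀, div_le_iff₀ hm₀]
  have hB : 0 ≤ B := (abs_nonneg y).trans hy
  have hδ0 : 0 ≤ δ := by linarith
  nlinarith [mul_le_mul hy h1 (abs_nonneg _) hB, mul_nonneg (mul_nonneg hB hδ0)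
    (by linarith : (0 : ℝ) ≤ m₀ - 3 / 4)]

lemma le_mul_exp_of_le_add {x M m e δ : ℝ} (h : x ≤ M + e * δ) (hm : 0 < m) (hmM : m ≤ M)
    (he : 0 ≤ e) (hδ : 0 ≤ δ) : x ≤ M * exp (e / m * δ) := by
  have hM : 0 < M := hm.trans_le hmM
  calc x ≤ M + e * δ := h
    _ ≤ M * (1 + e / m * δ) := by
        have : e * δ ≤ M * (e / m * δ) :=
          calc e * δ = m * (e / m * δ) := by field_simp
            _ ≤ M * (e / m * δ) := by gcongr
        linarith
    _ ≤ M * exp (e / m * δ) := by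
        gcongr
        linarith [add_one_le_exp (e / m * δ)]

-- `6 |c|` bounds the Lipschitz error of dropping `m₀`; the denominator bounds the main term below.
noncomputable def dilationConst (c : ℝ) : ℝ :=
  6 * |c| / (Φ c * exp (-(φ c / Φ c * |c|)))

lemma dilationConst_pos {c : ℝ} (hc : c ≠ 0) : 0 < dilationConst c := by
  have := stdNormalCDF_pos c
  unfold dilationConst
  positivity

lemma stdNormalCDF_add_div_le {c s δ m₀ K : ℝ} (hs : |s| ≤ |c|)
    (hrange : -2 * (φ c / Φ c) ≤ 2 * c + s) (hδ : δ ≤ 8⁻¹) (hm₁ : 1 - 2 * δ < m₀)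
    (hm₂ : m₀ < 1 + δ) (hK : dilationConst c ≤ K) :
    Φ ((c + s) / m₀) ≤ Φ c * exp (φ c / Φ c * s + K * δ) := by
  have hδ0 : 0 ≤ δ := by linarith
  have hΦ := stdNormalCDF_pos c
  have hr : 0 ≤ φ c / Φ c := (div_pos (stdNormalPDF_pos c) hΦ).le
  have hlip : Φ ((c + s) / m₀) ≤ Φ (c + s) + 6 * |c| * δ := by
    have h1 := abs_stdNormalCDF_sub_le ((c + s) / m₀) (c + s)
    have h2 := abs_div_sub_self_le
      ((abs_add_le c s).trans (by linarith : |c| + |s| ≤ 2 * |c|)) hδ hm₁ hm₂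
    linarith [(abs_le.1 (h1.trans h2)).2]
  have htangent : Φ (c + s) ≤ Φ c * exp (φ c / Φ c * s) := by
    simpa using stdNormalCDF_le_mul_exp (c := c) (x := c + s) (by linarith)
  have hmain : Φ c * exp (-(φ c / Φ c * |c|)) ≤ Φ c * exp (φ c / Φ c * s) := by
    gcongr
    nlinarith [neg_abs_le s]
  calc Φ ((c + s) / m₀) ≤ Φ c * exp (φ c / Φ c * s) * exp (dilationConst c * δ) := by
        refine le_mul_exp_of_le_add (by linarith) (by positivity) hmain (by positivity) hδ0
    _ ≤ Φ c * exp (φ c / Φ c * s + K * δ) := by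
        rw [exp_add, ← mul_assoc]
        gcongr

lemma gaussianReal_map_sqrt_mul {v : NNReal} (hv : v ≠ 0) :
    (gaussianReal 0 v⁻¹).map (fun x => √(v : ℝ) * x) = gaussianReal 0 1 := by
  rw [gaussianReal_map_const_mul, mul_zero]
  congr 1
  ext
  simp [Real.sq_sqrt v.coe_nonneg, hv]

lemma toReal_gaussianReal_setOf_le {v : NNReal} (hv : v ≠ 0) {m₀ : ℝ} (hm₀ : 0 < m₀)
    (c u : ℝ) :
    (gaussianReal 0 v⁻¹ {z | -c / √(v : ℝ) ≤ m₀ * z + u}).toReal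
      = Φ ((c + u * √(v : ℝ)) / m₀) := by
  have hsv : 0 < √(v : ℝ) := sqrt_pos.2 (NNReal.coe_pos.2 (pos_iff_ne_zero.2 hv))
  have hset : {z | -c / √(v : ℝ) ≤ m₀ * z + u}
      = (fun x => √(v : ℝ) * x) ⁻¹' Ici (-((c + u * √(v : ℝ)) / m₀)) := by
    ext z
    rw [mem_ofPred_eq, mem_preimage, mem_Ici, ← neg_div, div_le_iff₀ hm₀, div_le_iff₀ hsv]
    constructor <;> intro h <;> linarith
  rw [hset, ← Measure.map_apply (by fun_prop) measurableSet_Ici, gaussianReal_map_sqrt_mul hv,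
    toReal_gaussianReal_Ici, neg_neg]

lemma toReal_gaussianReal_setOf_lt {v : NNReal} (hv : v ≠ 0) {m₀ : ℝ} (hm₀ : 0 < m₀)
    (c u : ℝ) :
    (gaussianReal 0 v⁻¹ {z | m₀ * z + u < -c / √(v : ℝ)}).toReal
      = Φ ((-c + -(u * √(v : ℝ))) / m₀) := by
  have hsv : 0 < √(v : ℝ) := sqrt_pos.2 (NNReal.coe_pos.2 (pos_iff_ne_zero.2 hv))
  have hset : {z | m₀ * z + u < -c / √(v : ℝ)}
      = (fun x => √(v : ℝ) * x) ⁻¹' Iio ((-c + -(u * √(v : ℝ))) / m₀) := by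
    ext z
    rw [mem_ofPred_eq, mem_preimage, mem_Iio, lt_div_iff₀ hm₀, lt_div_iff₀ hsv]
    constructor <;> intro h <;> linarith
  rw [hset, ← Measure.map_apply (by fun_prop) measurableSet_Iio, gaussianReal_map_sqrt_mul hv,
    toReal_gaussianReal_Iio]

lemma toReal_pi_setOf_forall_mem {ι : Type*} [Fintype ι] {α : ι → Type*}
    [∀ i, MeasurableSpace (α i)] (μ : ∀ i, Measure (α i)) [∀ i, SigmaFinite (μ i)]
    (s : ∀ i, Set (α i)) :
    (Measure.pi μ {z | ∀ i, z i ∈ s i}).toReal = ∏ i, (μ i (s i)).toReal := by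
  rw [← ENNReal.toReal_prod, ← Measure.pi_pi]
  congr 2
  ext; simp

lemma prod_le_pow_mul_exp_sum {ι : Type*} [Fintype ι] {x s : ι → ℝ} {M r K δ : ℝ}
    (hx0 : ∀ i, 0 ≤ x i) (hx : ∀ i, x i ≤ M * exp (r * s i + K * δ)) :
    ∏ i, x i ≤ M ^ Fintype.card ι * exp (r * ∑ i, s i + K * Fintype.card ι * δ) := by
  calc ∏ i, x i ≤ ∏ i, M * exp (r * s i + K * δ) :=
        Finset.prod_le_prod (fun i _ => hx0 i) fun i _ => hx i
    _ = _ := by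
        rw [Finset.prod_mul_distrib, Finset.prod_const, ← exp_sum, Finset.sum_add_distrib,
          ← Finset.mul_sum, Finset.sum_const, nsmul_eq_mul, Finset.card_univ]
        ring_nf

section GaussianEvents

variable {ι : Type*} [Fintype ι] {v : NNReal} {c δ m₀ K : ℝ} {u : ι → ℝ}

lemma toReal_pi_forall_le_le (hv : v ≠ 0) (hc : 0 < c) (hu : ∀ i, |u i * √(v : ℝ)| ≤ c)
    (hδ : δ ≤ 8⁻¹) (hm₁ : 1 - 2 * δ < m₀) (hm₂ : m₀ < 1 + δ)
    (hK : dilationConst c ≤ K) :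
    (Measure.pi (fun _ : ι => gaussianReal 0 v⁻¹)
        {z | ∀ i, -c / √(v : ℝ) ≤ m₀ * z i + u i}).toReal ≤
      Φ c ^ Fintype.card ι *
        exp (φ c * √(v : ℝ) / Φ c * ∑ i, u i + K * Fintype.card ι * δ) := by
  have hm₀ : 0 < m₀ := by linarith
  have hfactor (i : ι) : Φ ((c + u i * √(v : ℝ)) / m₀)
      ≤ Φ c * exp (φ c / Φ c * (u i * √(v : ℝ)) + K * δ) :=
    stdNormalCDF_add_div_le ((hu i).trans (le_abs_self c))
      (by linarith [neg_abs_le (u i * √(v : ℝ)), hu i,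
        div_pos (stdNormalPDF_pos c) (stdNormalCDF_pos c)]) hδ hm₁ hm₂ hK
  refine (toReal_pi_setOf_forall_mem _
    fun i => {x | -c / √(v : ℝ) ≤ m₀ * x + u i}).trans_le ?_
  simp only [toReal_gaussianReal_setOf_le hv hm₀]
  refine (prod_le_pow_mul_exp_sum (fun i => (stdNormalCDF_pos _).le) hfactor).trans_eq ?_
  rw [← Finset.sum_mul]
  ring_nf

lemma toReal_pi_forall_lt_le (hv : v ≠ 0) (hc : 0 < c) (hu : ∀ i, |u i * √(v : ℝ)| ≤ c)
    (hu' : ∀ i, u i * √(v : ℝ) ≤ 2 * (φ c / Φ (-c) - c))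
    (hδ : δ ≤ 8⁻¹) (hm₁ : 1 - 2 * δ < m₀) (hm₂ : m₀ < 1 + δ)
    (hK : dilationConst (-c) ≤ K) :
    (Measure.pi (fun _ : ι => gaussianReal 0 v⁻¹)
        {z | ∀ i, m₀ * z i + u i < -c / √(v : ℝ)}).toReal ≤
      Φ (-c) ^ Fintype.card ι *
        exp (-(φ c * √(v : ℝ) / Φ (-c)) * ∑ i, u i + K * Fintype.card ι * δ) := by
  have hm₀ : 0 < m₀ := by linarith
  have hfactor (i : ι) : Φ ((-c + -(u i * √(v : ℝ))) / m₀)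
      ≤ Φ (-c) * exp (φ c / Φ (-c) * -(u i * √(v : ℝ)) + K * δ) := by
    rw [← stdNormalPDF_neg]
    refine stdNormalCDF_add_div_le ?_ ?_ hδ hm₁ hm₂ hK
    · rw [abs_neg, abs_neg, abs_of_pos hc]
      exact hu i
    · rw [stdNormalPDF_neg]
      linarith [hu' i]
  refine (toReal_pi_setOf_forall_mem _
    fun i => {x | m₀ * x + u i < -c / √(v : ℝ)}).trans_le ?_
  simp only [toReal_gaussianReal_setOf_lt hv hm₀]
  refine (prod_le_pow_mul_exp_sum (fun i => (stdNormalCDF_pos _).le) hfactor).trans_eq ?_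
  rw [Finset.sum_neg_distrib, ← Finset.sum_mul]
  ring_nf

lemma toReal_pi_gaussian_events_le (hv : v ≠ 0) (hc : 0 < c)
    (hu : ∀ i, |u i * √(v : ℝ)| ≤ min c (2 * (φ c / Φ (-c) - c)))
    (hδ : δ ≤ 8⁻¹) (hm₁ : 1 - 2 * δ < m₀) (hm₂ : m₀ < 1 + δ) :
    (Measure.pi (fun _ : ι => gaussianReal 0 v⁻¹)
        {z | ∀ i, -c / √(v : ℝ) ≤ m₀ * z i + u i}).toReal ≤
      (1 - Φ (-c)) ^ Fintype.card ι * exp (φ c * √(v : ℝ) / (1 - Φ (-c)) * ∑ i, u i +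
        (dilationConst c + dilationConst (-c)) * Fintype.card ι * δ) ∧
    (Measure.pi (fun _ : ι => gaussianReal 0 v⁻¹)
        {z | ∀ i, m₀ * z i + u i < -c / √(v : ℝ)}).toReal ≤
      Φ (-c) ^ Fintype.card ι * exp (-(φ c * √(v : ℝ) / Φ (-c)) * ∑ i, u i +
        (dilationConst c + dilationConst (-c)) * Fintype.card ι * δ) := by
  rw [show 1 - Φ (-c) = Φ c by rw [stdNormalCDF_neg, sub_sub_cancel]]
  exact ⟨toReal_pi_forall_le_le hv hc (fun i => (hu i).trans (min_le_left _ _)) hδ hm₁ hm₂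
      (le_add_of_nonneg_right (dilationConst_pos (neg_ne_zero.2 hc.ne')).le),
    toReal_pi_forall_lt_le hv hc (fun i => (hu i).trans (min_le_left _ _))
      (fun i => (le_abs_self _).trans ((hu i).trans (min_le_right _ _))) hδ hm₁ hm₂
      (le_add_of_nonneg_left (dilationConst_pos hc.ne').le)⟩

end GaussianEvents

lemma mul_rpow_neg_quarter_le {α : ℝ} {D ℓ : ℕ} (hD : 8 * α ≤ D) (hℓ : 8 * α ≤ ℓ) :
    α * ((D ^ 2 * ℓ ^ 2 : ℕ) : ℝ) ^ (-(1 / 4) : ℝ) ≤ 8⁻¹ := by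
  rcases le_or_gt α 0 with hα | hα
  · nlinarith [rpow_nonneg (Nat.cast_nonneg (α := ℝ) (D ^ 2 * ℓ ^ 2)) (-(1 / 4))]
  have hP : 0 < (D * ℓ : ℝ) := by
    have : (0 : ℝ) < D := by linarith
    have : (0 : ℝ) < ℓ := by linarith
    positivity
  have hd : ((D ^ 2 * ℓ ^ 2 : ℕ) : ℝ) = (D * ℓ : ℝ) ^ (2 : ℝ) := by
    rw [rpow_two]
    push_cast
    ring
  rw [hd, ← rpow_mul hP.le, show (2 : ℝ) * -(1 / 4) = -(1 / 2) by norm_num, rpow_neg hP.le,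
    ← sqrt_eq_rpow, ← div_eq_mul_inv, div_le_iff₀ (sqrt_pos.2 hP)]
  have : 8 * α ≤ √(D * ℓ : ℝ) := le_sqrt_of_sq_le (by nlinarith)
  linarith

lemma abs_sum_mul_le_sq {ι : Type*} (s : Finset ι) {x y : ι → ℝ} {B : ℝ}
    (hx : √(∑ i ∈ s, x i ^ 2) ≤ B) (hy : √(∑ i ∈ s, y i ^ 2) ≤ B) :
    |∑ i ∈ s, x i * y i| ≤ B ^ 2 := by
  have hCS := sum_mul_le_sqrt_mul_sqrt s (fun i => -x i) y
  simp only [neg_mul, Finset.sum_neg_distrib, neg_sq] at hCS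
  have hCS' := sum_mul_le_sqrt_mul_sqrt s x y
  have hB := mul_le_mul hx hy (sqrt_nonneg _) ((sqrt_nonneg _).trans hx)
  exact abs_le.2 ⟨by nlinarith, by nlinarith⟩

lemma abs_sum_mul_mul_sqrt_le {ι : Type*} [Fintype ι] {x y : ι → ℝ} {α : ℝ} {D ℓ : ℕ}
    (hD : 0 < D) (hℓ : 0 < ℓ)
    (hx : √(∑ i, x i ^ 2) ≤ α * √ℓ / √((D ^ 2 * ℓ ^ 2 : ℕ) : ℝ))
    (hy : √(∑ i, y i ^ 2) ≤ α * √ℓ / √((D ^ 2 * ℓ ^ 2 : ℕ) : ℝ)) :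
    |(∑ i, x i * y i) * √((D ^ 2 * ℓ ^ 2 : ℕ) : ℝ)| ≤ α ^ 2 / D := by
  have hsqrt : √((D ^ 2 * ℓ ^ 2 : ℕ) : ℝ) = D * ℓ := by
    rw [show ((D ^ 2 * ℓ ^ 2 : ℕ) : ℝ) = (D * ℓ : ℝ) ^ 2 by push_cast; ring,
      sqrt_sq (by positivity)]
  have hD' : (0 : ℝ) < D := by exact_mod_cast hD
  have hℓ' : (0 : ℝ) < ℓ := by exact_mod_cast hℓ
  rw [abs_mul, abs_of_nonneg (sqrt_nonneg _)]
  refine (mul_le_mul_of_nonneg_right (abs_sum_mul_le_sq _ hx hy) (sqrt_nonneg _)).trans_eq ?_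
  rw [hsqrt, div_pow, mul_pow, sq_sqrt hℓ'.le]
  field_simp

theorem stmt_17_general (C : ℝ) (p : ℝ) :
    ∃ K : ℝ, 0 < K ∧ ∃ D₀ ℓ₀ : ℕ,
      ∀ D ℓ : ℕ, D₀ ≤ D → ℓ₀ ≤ ℓ → ∀ d : ℕ, d = D ^ 2 * ℓ ^ 2 →
      ∀ c : ℝ, 0 < c → stdNormalCDF (-c) = p →
      ∀ α δ : ℝ, α = 100 * C * Real.log (10 / p) → δ = α * (d : ℝ) ^ (-(1 / 4) : ℝ) →
      ∀ k : ℕ, 1 ≤ k → (k : ℝ) ≤ C * ℓ →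
      ∀ m : ℕ, ∀ v : Fin m → ℝ, ∀ vs : Fin k → Fin m → ℝ,
        Real.sqrt (∑ j, v j ^ 2) ≤ α * Real.sqrt ℓ / Real.sqrt d →
        (∀ i : Fin k, Real.sqrt (∑ j, vs i j ^ 2) ≤ α * Real.sqrt ℓ / Real.sqrt d) →
      ∀ m₀ : ℝ, 1 - 2 * δ < m₀ → m₀ < 1 + δ →
        ((Measure.pi fun _ : Fin k => gaussianReal 0 (d : NNReal)⁻¹)
            {z | ∀ i : Fin k,
              -c / Real.sqrt d ≤ m₀ * z i + ∑ j, vs i j * v j}).toReal ≤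
          (1 - p) ^ k *
            Real.exp (stdNormalPDF c * Real.sqrt d / (1 - p) *
                (∑ i, ∑ j, vs i j * v j) + K * k * δ) ∧
        ((Measure.pi fun _ : Fin k => gaussianReal 0 (d : NNReal)⁻¹)
            {z | ∀ i : Fin k,
              m₀ * z i + (∑ j, vs i j * v j) < -c / Real.sqrt d}).toReal ≤
          p ^ k *
            Real.exp (-(stdNormalPDF c * Real.sqrt d / p) *
                (∑ i, ∑ j, vs i j * v j) + K * k * δ) := by
  by_cases hp : ∃ c, 0 < c ∧ Φ (-c) = p
  swap
  · exact ⟨1, one_pos, 0, 0, fun _ _ _ _ _ _ c hc hcp => absurd ⟨c, hc, hcp⟩ hp⟩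
  obtain ⟨c, hc, rfl⟩ := hp
  set α := 100 * C * log (10 / Φ (-c))
  set ε := min c (2 * (φ c / Φ (-c) - c))
  have hε : 0 < ε := lt_min hc <| by
    have := (lt_div_iff₀ (stdNormalCDF_pos (-c))).2 (mul_stdNormalCDF_neg_lt c)
    linarith
  refine ⟨dilationConst c + dilationConst (-c),
    add_pos (dilationConst_pos hc.ne') (dilationConst_pos (neg_ne_zero.2 hc.ne')),
    ⌈max (α ^ 2 / ε) (8 * α)⌉₊ + 1, ⌈8 * α⌉₊ + 1, ?_⟩
  rintro D ℓ hD hℓ d rfl c' hc' hc'c _ δ rfl rfl k - - m v vs hv hvs m₀ hm₁ hm₂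
  obtain rfl : c = c' := by simpa using (stdNormalCDF_strictMono.injective hc'c).symm
  have hDα : max (α ^ 2 / ε) (8 * α) ≤ D := Nat.ceil_le.1 (by omega)
  have hδ := mul_rpow_neg_quarter_le (ℓ := ℓ) (le_of_max_le_right hDα)
    (Nat.ceil_le.1 (by omega))
  have hd0 : ((D ^ 2 * ℓ ^ 2 : ℕ) : NNReal) ≠ 0 := by norm_num; omega
  have hu (i : Fin k) : |(∑ j, vs i j * v j) * √((D ^ 2 * ℓ ^ 2 : ℕ) : ℝ)| ≤ ε :=
    (abs_sum_mul_mul_sqrt_le (by omega) (by omega) (hvs i) hv).trans <|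
      div_le_of_le_mul₀ (Nat.cast_nonneg _) hε.le <| by
        linarith [(div_le_iff₀ hε).1 (le_of_max_le_left hDα)]
  have key := toReal_pi_gaussian_events_le hd0 hc
    (fun i => by simpa only [NNReal.coe_natCast] using hu i) hδ hm₁ hm₂
  simpa only [NNReal.coe_natCast, Fintype.card_fin] using key

/-- For all `C > 1`, `p ∈ (0,1/2)` there are `K > 0`, `D₀`, `ℓ₀`
(depending only on `p, C`) such that: for integers `D ≥ D₀`, `ℓ ≥ ℓ₀`, `d = D²ℓ²`, any
positive integer `k ≤ Cℓ`, fixed vectors `v, v_1, …, v_k ∈ ℝ^m` of norm at most `α√ℓ/√d`,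
a fixed `m₀ ∈ (1-2δ, 1+δ)` and i.i.d. `Z_1, …, Z_k ~ N(0,1/d)`:
`P[∀ i, m₀ Z_i + ⟨v_i, v⟩ ≥ -c_p/√d] ≤ (1-p)^k exp((a√d/(1-p)) Σ_i ⟨v_i, v⟩ + K k δ)` and
`P[∀ i, m₀ Z_i + ⟨v_i, v⟩ < -c_p/√d] ≤ p^k exp(-(a√d/p) Σ_i ⟨v_i, v⟩ + K k δ)`, where
`Φ(-c_p) = p`, `c_p > 0`, `a = φ(c_p)`, `α = 100 C log(10/p)`, `δ = α d^{-1/4}`. -/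
theorem stmt_17 (C : ℝ) (hC : 1 < C) (p : ℝ) (hp0 : 0 < p) (hp2 : p < 1 / 2) :
    ∃ K : ℝ, 0 < K ∧ ∃ D₀ ℓ₀ : ℕ,
      ∀ D ℓ : ℕ, D₀ ≤ D → ℓ₀ ≤ ℓ → ∀ d : ℕ, d = D ^ 2 * ℓ ^ 2 →
      ∀ c : ℝ, 0 < c → stdNormalCDF (-c) = p →
      ∀ α δ : ℝ, α = 100 * C * Real.log (10 / p) → δ = α * (d : ℝ) ^ (-(1 / 4) : ℝ) →
      ∀ k : ℕ, 1 ≤ k → (k : ℝ) ≤ C * ℓ →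
      ∀ m : ℕ, ∀ v : Fin m → ℝ, ∀ vs : Fin k → Fin m → ℝ,
        Real.sqrt (∑ j, v j ^ 2) ≤ α * Real.sqrt ℓ / Real.sqrt d →
        (∀ i : Fin k, Real.sqrt (∑ j, vs i j ^ 2) ≤ α * Real.sqrt ℓ / Real.sqrt d) →
      ∀ m₀ : ℝ, 1 - 2 * δ < m₀ → m₀ < 1 + δ →
        ((Measure.pi fun _ : Fin k => gaussianReal 0 (d : NNReal)⁻¹)
            {z | ∀ i : Fin k,
              -c / Real.sqrt d ≤ m₀ * z i + ∑ j, vs i j * v j}).toReal ≤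
          (1 - p) ^ k *
            Real.exp (stdNormalPDF c * Real.sqrt d / (1 - p) *
                (∑ i, ∑ j, vs i j * v j) + K * k * δ) ∧
        ((Measure.pi fun _ : Fin k => gaussianReal 0 (d : NNReal)⁻¹)
            {z | ∀ i : Fin k,
              m₀ * z i + (∑ j, vs i j * v j) < -c / Real.sqrt d}).toReal ≤
          p ^ k *
            Real.exp (-(stdNormalPDF c * Real.sqrt d / p) *
                (∑ i, ∑ j, vs i j * v j) + K * k * δ) :=
  stmt_17_general C p
end
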